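/- T(h) = (16/15)·h³ + O(h²) as h → ∞: there exists a constant C such that |T(h) − (16/15)h³| ≤ C·h² for all integers h ≥ 1. -/
import Mathlib


open Finset

/-- `V_h(i)`: the expected number of visits to `i` of the excursion
conditioned to have height `h`. -/
noncomputable def Vf (h i : ℕ) : ℝ :=
  2 * i * ((h : ℝ) - i) / h + 2 * i * ((h : ℝ) + 1 - i) / ((h : ℝ) + 1)

/-- `U_h(i)`: the expected number of `{i,i+1}`-crossings of the excursion
conditioned to have height `h`. -/
noncomputable def Uf (h i : ℕ) : ℝ :=
  2 * ((h : ℝ) - i) * ((i : ℝ) + 1) / h +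
    2 * ((h : ℝ) - i + 1) * ((i : ℝ) + 1) / ((h : ℝ) + 1) - 2

/-- `T(h) = 2 Σ_{i=1}^h V_h(i) U_h(h-i)`. -/
noncomputable def Tf (h : ℕ) : ℝ := 2 * ∑ i ∈ Icc 1 h, Vf h i * Uf h (h - i)

/-- `N_h(i,j)`: the expected number of sub-up-excursions `i↗j↘i` of the
excursion conditioned to have height `h`. -/
noncomputable def Nf (h i j : ℕ) : ℝ :=
  ((i : ℝ) * ((h : ℝ) - i) / h + (i : ℝ) * ((h : ℝ) + 1 - i) / ((h : ℝ) + 1)) /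
    (((j : ℝ) - i) * ((j : ℝ) + 1 - i))

/-- `M_h(i,j)`: the expected number of sub-down-excursions `j↘i↗j` of the
excursion conditioned to have height `h`. -/
noncomputable def Mf (h i j : ℕ) : ℝ :=
  (((h : ℝ) - j) * j / h + ((h : ℝ) + 1 - j) * j / ((h : ℝ) + 1)) /
    (((j : ℝ) - i) * ((j : ℝ) + 1 - i))

/-- The recursion defining `L(h)`, the expected length of the corner
percolation contour determined by two independent excursions conditioned to
have height `h`.  The two sums run over pairs `1 ≤ i < j ≤ h-1` and
`1 ≤ i < j ≤ h` respectively. -/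
def SatisfiesLRec (L : ℕ → ℝ) : Prop :=
  ∀ h : ℕ, 1 ≤ h →
    L h = Tf h
      - ∑ j ∈ Icc 1 (h - 1), ∑ i ∈ Ico 1 j,
          Nf h i j * Nf h (h - j) (h - i) * L (j - i)
      - ∑ j ∈ Icc 1 h, ∑ i ∈ Ico 1 j,
          Mf h i j * Mf h (h + 1 - j) (h + 1 - i) * L (j - i)

private lemma sum_sq_aux (n : ℕ) :
    ∑ i ∈ Icc 1 n, (i : ℝ) ^ 2 = n * (n + 1) * (2 * n + 1) / 6 := by
  induction n with
  | zero => simp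
  | succ n ih =>
    rw [Finset.sum_Icc_succ_top (by omega), ih]
    push_cast
    ring

private lemma sum_cube_aux (n : ℕ) :
    ∑ i ∈ Icc 1 n, (i : ℝ) ^ 3 = (n : ℝ) ^ 2 * (n + 1) ^ 2 / 4 := by
  induction n with
  | zero => simp
  | succ n ih =>
    rw [Finset.sum_Icc_succ_top (by omega), ih]
    push_cast
    ring

private lemma sum_quart_aux (n : ℕ) :
    ∑ i ∈ Icc 1 n, (i : ℝ) ^ 4
      = n * (n + 1) * (2 * n + 1) * (3 * (n : ℝ) ^ 2 + 3 * n - 1) / 30 := by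
  induction n with
  | zero => simp
  | succ n ih =>
    rw [Finset.sum_Icc_succ_top (by omega), ih]
    push_cast
    ring

private lemma Tf_closed (h : ℕ) (hh : 1 ≤ h) :
    Tf h = (16 * (h : ℝ) ^ 7 + 56 * (h : ℝ) ^ 6 + 84 * (h : ℝ) ^ 5 + 70 * (h : ℝ) ^ 4
        + 24 * (h : ℝ) ^ 3 - 6 * (h : ℝ) ^ 2 - 4 * h)
      / (15 * (h : ℝ) ^ 2 * ((h : ℝ) + 1) ^ 2) := by
  have hx0 : (0 : ℝ) < (h : ℝ) := by exact_mod_cast hh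
  have hx0' : ((h : ℝ)) ≠ 0 := ne_of_gt hx0
  have hx1' : ((h : ℝ) + 1) ≠ 0 := by positivity
  have key : ∀ i ∈ Icc 1 h, Vf h i * Uf h (h - i)
      = ((16 * (h : ℝ) ^ 4 + 32 * (h : ℝ) ^ 3 + 24 * (h : ℝ) ^ 2 + 8 * h) * (i : ℝ) ^ 2
        + (-32 * (h : ℝ) ^ 3 - 48 * (h : ℝ) ^ 2 - 24 * (h : ℝ) - 4) * (i : ℝ) ^ 3
        + (16 * (h : ℝ) ^ 2 + 16 * (h : ℝ) + 4) * (i : ℝ) ^ 4)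
        / ((h : ℝ) ^ 2 * ((h : ℝ) + 1) ^ 2) := by
    intro i hi
    rw [Finset.mem_Icc] at hi
    have hcast : ((h - i : ℕ) : ℝ) = (h : ℝ) - i := by
      have := hi.2
      push_cast [Nat.cast_sub this]
      ring
    unfold Vf Uf
    rw [hcast]
    field_simp
    ring
  rw [Tf, Finset.sum_congr rfl key]
  rw [← Finset.sum_div]
  have expand : ∀ i ∈ Icc 1 h,
      ((16 * (h : ℝ) ^ 4 + 32 * (h : ℝ) ^ 3 + 24 * (h : ℝ) ^ 2 + 8 * h) * (i : ℝ) ^ 2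
        + (-32 * (h : ℝ) ^ 3 - 48 * (h : ℝ) ^ 2 - 24 * (h : ℝ) - 4) * (i : ℝ) ^ 3
        + (16 * (h : ℝ) ^ 2 + 16 * (h : ℝ) + 4) * (i : ℝ) ^ 4)
      = (16 * (h : ℝ) ^ 4 + 32 * (h : ℝ) ^ 3 + 24 * (h : ℝ) ^ 2 + 8 * h) * (i : ℝ) ^ 2
        + (-32 * (h : ℝ) ^ 3 - 48 * (h : ℝ) ^ 2 - 24 * (h : ℝ) - 4) * (i : ℝ) ^ 3
        + (16 * (h : ℝ) ^ 2 + 16 * (h : ℝ) + 4) * (i : ℝ) ^ 4 := fun i _ => rfl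
  rw [Finset.sum_add_distrib, Finset.sum_add_distrib,
      ← Finset.mul_sum, ← Finset.mul_sum, ← Finset.mul_sum,
      sum_sq_aux, sum_cube_aux, sum_quart_aux]
  field_simp
  ring

/-- `T(h) = (16/15) h³ + O(h²)`. -/
theorem statement_18 :
    ∃ C : ℝ, ∀ h : ℕ, 1 ≤ h →
      |Tf h - 16/15 * (h : ℝ) ^ 3| ≤ C * (h : ℝ) ^ 2 := by
  refine ⟨15, fun h hh => ?_⟩
  have hx1 : (1 : ℝ) ≤ (h : ℝ) := by exact_mod_cast hh
  have hx0 : (0 : ℝ) < (h : ℝ) := by linarith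
  have hden : (0 : ℝ) < 15 * (h : ℝ) ^ 2 * ((h : ℝ) + 1) ^ 2 := by positivity
  have hdiff : Tf h - 16/15 * (h : ℝ) ^ 3
      = (24 * (h : ℝ) ^ 6 + 68 * (h : ℝ) ^ 5 + 70 * (h : ℝ) ^ 4 + 24 * (h : ℝ) ^ 3
          - 6 * (h : ℝ) ^ 2 - 4 * h) / (15 * (h : ℝ) ^ 2 * ((h : ℝ) + 1) ^ 2) := by
    rw [Tf_closed h hh]
    field_simp
    ring
  rw [hdiff, abs_of_nonneg, div_le_iff₀ hden]
  · nlinarith [pow_pos hx0 3, pow_pos hx0 4, pow_pos hx0 5, pow_pos hx0 6,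
      mul_le_mul_of_nonneg_left hx1 (pow_pos hx0 5).le,
      mul_le_mul_of_nonneg_left hx1 (pow_pos hx0 4).le,
      mul_le_mul_of_nonneg_left hx1 (pow_pos hx0 3).le]
  · apply div_nonneg _ hden.le
    nlinarith [pow_pos hx0 3, pow_pos hx0 6, pow_pos hx0 5, pow_pos hx0 4]
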